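/- arXiv:2403.09796 — 3 statements merged into one kernel-verified Lean document; each statement's English description precedes it below -/
import Mathlib

section
/- Let k be a commutative ring and g a Lie algebra over k. On the k-module X = k ⊕ g, define q((a,x) ⊗ (b,y)) = (ab, bx + [x,y]). Then q satisfies the (linearized) self-distributivity condition: for all (a,x), (b,y), (c,z) in X, q(q((a,x)⊗(b,y))⊗(c,z)) = q(q((a,x)⊗(c,z)^{(1)})⊗q((b,y)⊗(c,z)^{(2)})), where the comultiplication is Δ(c,z) = (c,z)⊗(1,0) + (1,0)⊗(0,z). -/
variable {k : Type*} [CommRing k] {L : Type*} [LieRing L] [LieAlgebra k L]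

/-- The binary operation `q((a,x)⊗(b,y)) = (ab, b•x + ⁅x,y⁆)` on `X = k ⊕ g`. -/
def q (u v : k × L) : k × L := (u.1 * v.1, v.1 • u.2 + ⁅u.2, v.2⁆)

/-- Linearized self-distributivity of `q` with respect to the comultiplication
`Δ(c,z) = (c,z)⊗(1,0) + (1,0)⊗(0,z)`:
`q(q(u⊗v)⊗w) = Σ q(q(u⊗w^{(1)})⊗q(v⊗w^{(2)}))`. -/
theorem q_self_distributive (a b c : k) (x y z : L) :
    q (q (a, x) (b, y)) (c, z) =
      q (q (a, x) (c, z)) (q (b, y) (1, 0)) +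
        q (q (a, x) (1, 0)) (q (b, y) (0, z)) := by
  simp only [q, Prod.mk_add_mk, Prod.mk.injEq]
  constructor
  · ring
  · simp [lie_add, add_lie, lie_smul, smul_lie, smul_add, lie_lie, smul_smul, mul_comm]
    have h1 : ⁅x, ⁅z, y⁆⁆ = ⁅⁅x,z⁆,y⁆ + ⁅z,⁅x,y⁆⁆ := leibniz_lie x z y
    have h2 : ⁅⁅x,z⁆,y⁆ = -⁅y,⁅x,z⁆⁆ := (lie_skew _ _).symm
    rw [h1, h2]
    abel
end

section
/- Let k be a commutative ring, g a Lie algebra over k, and X = k ⊕ g with Δ(a,x) = (a,x)⊗(1,0) + (1,0)⊗(0,x) and q((a,x)⊗(b,y)) = (ab, bx + [x,y]). Define R: X ⊗ X → X ⊗ X by R(u ⊗ v) = v^{(1)} ⊗ q(u ⊗ v^{(2)}) (Sweedler notation for Δ(v)). Then R satisfies the Yang–Baxter equation (R⊗1)(1⊗R)(R⊗1) = (1⊗R)(R⊗1)(1⊗R) on X ⊗ X ⊗ X. -/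
open TensorProduct

noncomputable section

variable (k : Type*) [CommRing k] (L : Type*) [LieRing L] [LieAlgebra k L]

abbrev X := k × L

/-- The self-distributive operation `q((a,x)⊗(b,y)) = (ab, b•x + ⁅x,y⁆)` as a bilinear map. -/
def qc : X k L →ₗ[k] X k L →ₗ[k] X k L :=
  LinearMap.mk₂ k (fun u v => (u.1 * v.1, v.1 • u.2 + ⁅u.2, v.2⁆))
    (fun m₁ m₂ n => by
      simp only [Prod.fst_add, Prod.snd_add, Prod.mk_add_mk, Prod.mk.injEq]
      exact ⟨by ring, by rw [smul_add, add_lie]; abel⟩)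
    (fun c m n => by
      simp only [Prod.smul_fst, Prod.smul_snd, Prod.smul_mk, smul_eq_mul, Prod.mk.injEq]
      exact ⟨by ring, by rw [smul_lie, smul_comm n.1 c, smul_add]⟩)
    (fun m n₁ n₂ => by
      simp only [Prod.fst_add, Prod.snd_add, Prod.mk_add_mk, Prod.mk.injEq]
      exact ⟨by ring, by rw [add_smul, lie_add]; abel⟩)
    (fun c m n => by
      simp only [Prod.smul_fst, Prod.smul_snd, Prod.smul_mk, smul_eq_mul, Prod.mk.injEq]
      exact ⟨by ring, by rw [lie_smul, smul_add, mul_smul]⟩)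

/-- The comultiplication `Δ(a,x) = (a,x)⊗(1,0) + (1,0)⊗(0,x)`. -/
def Delta : X k L →ₗ[k] X k L ⊗[k] X k L where
  toFun u := u ⊗ₜ (1, 0) + (1, 0) ⊗ₜ ((0 : k), u.2)
  map_add' u v := by
    try dsimp only
    rw [show ((0 : k), (u + v).2) = ((0 : k), u.2) + ((0 : k), v.2) by
      simp [Prod.mk_add_mk]]
    rw [add_tmul, tmul_add]; abel
  map_smul' c u := by
    try dsimp only
    rw [show ((0 : k), (c • u).2) = c • ((0 : k), u.2) by simp [Prod.smul_mk],
      tmul_smul]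
    simp [smul_add, smul_tmul']

/-- The counit `ε(a,x) = a`. -/
def eps : X k L →ₗ[k] k := LinearMap.fst k k L

/-- The Yang-Baxter operator `R(u ⊗ v) = v^{(1)} ⊗ q(u ⊗ v^{(2)})` associated to the
Lie algebra `L`. -/
def Rop : X k L ⊗[k] X k L →ₗ[k] X k L ⊗[k] X k L :=
  TensorProduct.lift <| LinearMap.mk₂ k
    (fun u v => (LinearMap.lTensor (X k L) (qc k L u)) (Delta k L v))
    (fun u₁ u₂ v => by simp [map_add, LinearMap.lTensor_add, LinearMap.add_apply])
    (fun c u v => by simp [map_smul, LinearMap.lTensor_smul, LinearMap.smul_apply])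
    (fun u v₁ v₂ => by simp)
    (fun c u v => by simp)

variable {k}

/-- `F ⊗ 1` acting on the first two factors of `V ⊗ (V ⊗ V)`. -/
def map12 {V : Type*} [AddCommGroup V] [Module k V]
    (F : V ⊗[k] V →ₗ[k] V ⊗[k] V) :
    V ⊗[k] (V ⊗[k] V) →ₗ[k] V ⊗[k] (V ⊗[k] V) :=
  (TensorProduct.assoc k V V V).toLinearMap ∘ₗ F.rTensor V ∘ₗ
    (TensorProduct.assoc k V V V).symm.toLinearMap

/-- `1 ⊗ F` acting on the last two factors of `V ⊗ (V ⊗ V)`. -/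
def map23 {V : Type*} [AddCommGroup V] [Module k V]
    (F : V ⊗[k] V →ₗ[k] V ⊗[k] V) :
    V ⊗[k] (V ⊗[k] V) →ₗ[k] V ⊗[k] (V ⊗[k] V) :=
  F.lTensor V

/-- The Yang-Baxter equation for an operator `F : V ⊗ V → V ⊗ V`. -/
def YBE {V : Type*} [AddCommGroup V] [Module k V]
    (F : V ⊗[k] V →ₗ[k] V ⊗[k] V) : Prop :=
  map12 F ∘ₗ map23 F ∘ₗ map12 F = map23 F ∘ₗ map12 F ∘ₗ map23 F

/-- The second Yang-Baxter differential. -/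
def dYB {V : Type*} [AddCommGroup V] [Module k V]
    (R φ : V ⊗[k] V →ₗ[k] V ⊗[k] V) :
    V ⊗[k] (V ⊗[k] V) →ₗ[k] V ⊗[k] (V ⊗[k] V) :=
  map12 R ∘ₗ map23 R ∘ₗ map12 φ + map12 R ∘ₗ map23 φ ∘ₗ map12 R +
    map12 φ ∘ₗ map23 R ∘ₗ map12 R - map23 R ∘ₗ map12 R ∘ₗ map23 φ -
    map23 R ∘ₗ map12 φ ∘ₗ map23 R - map23 φ ∘ₗ map12 R ∘ₗ map23 R

/-- The first Yang-Baxter differential. -/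
def dYB1 {V : Type*} [AddCommGroup V] [Module k V]
    (R : V ⊗[k] V →ₗ[k] V ⊗[k] V) (f : V →ₗ[k] V) :
    V ⊗[k] V →ₗ[k] V ⊗[k] V :=
  R ∘ₗ f.rTensor V + R ∘ₗ f.lTensor V - f.rTensor V ∘ₗ R - f.lTensor V ∘ₗ R

end

/-!
Writing `e = (1, 0)` and `β(u, v) = (0, ⁅u.2, v.2⁆)`, the operator is `R(u ⊗ v) = v ⊗ u + e ⊗ β(u, v)`,
with `β(e, -) = β(-, e) = 0`. Expanding both sides of the Yang–Baxter equation on `u ⊗ v ⊗ w`,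
all terms agree except the `e ⊗ e ⊗ -` ones, which are `β(β(u, v), w)` on the left and
`β(u, β(v, w)) + β(β(u, w), v)` on the right: they match by the Leibniz form of the Jacobi identity.
So the argument works for any bilinear `β` satisfying that identity and annihilating `e`.
-/

section LeibnizBraiding

variable {k V : Type*} [CommRing k] [AddCommGroup V] [Module k V]

def leibnizBraiding (e : V) (β : V →ₗ[k] V →ₗ[k] V) : V ⊗[k] V →ₗ[k] V ⊗[k] V :=
  (TensorProduct.comm k V V).toLinearMap + TensorProduct.mk k V V e ∘ₗ TensorProduct.lift β

@[simp]
lemma leibnizBraiding_tmul (e : V) (β : V →ₗ[k] V →ₗ[k] V) (u v : V) :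
    leibnizBraiding e β (u ⊗ₜ v) = v ⊗ₜ u + e ⊗ₜ β u v := by
  simp [leibnizBraiding]

theorem ybe_leibnizBraiding (e : V) (β : V →ₗ[k] V →ₗ[k] V) (hβ_left : β e = 0)
    (hβ_right : ∀ x, β x e = 0) (hβ_leibniz : ∀ u v w, β (β u v) w = β u (β v w) + β (β u w) v) :
    YBE (leibnizBraiding e β) := by
  refine TensorProduct.ext_threefold' fun u v w => ?_
  simp only [map12, map23, LinearMap.comp_apply, LinearEquiv.coe_coe, assoc_symm_tmul,
    LinearMap.rTensor_tmul, LinearMap.lTensor_tmul, leibnizBraiding_tmul, map_add, tmul_add,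
    add_tmul, assoc_tmul, hβ_left, hβ_right, LinearMap.zero_apply, tmul_zero, add_zero]
  rw [hβ_leibniz u v w, tmul_add, tmul_add]
  abel

end LeibnizBraiding

section BracketSnd

variable (k : Type*) [CommRing k] (L : Type*) [LieRing L] [LieAlgebra k L]

def bracketSnd : X k L →ₗ[k] X k L →ₗ[k] X k L :=
  ((LieModule.toEnd k L L : L →ₗ[k] L →ₗ[k] L).compr₂ (LinearMap.inr k k L)).compl₁₂
    (LinearMap.snd k k L) (LinearMap.snd k k L)

@[simp]
lemma bracketSnd_apply (u v : X k L) : bracketSnd k L u v = ((0 : k), ⁅u.2, v.2⁆) := by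
  simp [bracketSnd]

lemma bracketSnd_one_zero : bracketSnd k L (1, 0) = 0 := by
  ext v <;> simp

lemma bracketSnd_apply_one_zero (u : X k L) : bracketSnd k L u (1, 0) = 0 := by
  simp

lemma bracketSnd_bracketSnd (u v w : X k L) :
    bracketSnd k L (bracketSnd k L u v) w =
      bracketSnd k L u (bracketSnd k L v w) + bracketSnd k L (bracketSnd k L u w) v := by
  simp only [bracketSnd_apply, Prod.mk_add_mk, add_zero]
  rw [lie_lie, sub_eq_add_neg, lie_skew]

theorem Rop_eq_leibnizBraiding : Rop k L = leibnizBraiding (1, 0) (bracketSnd k L) :=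
  TensorProduct.ext' fun u v => by simp [Rop, Delta, qc]

end BracketSnd

/-- The Yang-Baxter operator `R(u ⊗ v) = v^{(1)} ⊗ q(u ⊗ v^{(2)})` associated to a Lie
algebra `g` on `X = k ⊕ g` satisfies the Yang-Baxter equation
`(R⊗1)(1⊗R)(R⊗1) = (1⊗R)(R⊗1)(1⊗R)`. -/
theorem Rop_yang_baxter (k : Type*) [CommRing k] (L : Type*) [LieRing L]
    [LieAlgebra k L] : YBE (Rop k L) := by
  rw [Rop_eq_leibnizBraiding]
  exact ybe_leibnizBraiding _ _ (bracketSnd_one_zero k L) (bracketSnd_apply_one_zero k L)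
    (bracketSnd_bracketSnd k L)
end

section
/- Let g be a Lie algebra over a commutative ring k and X = k⊕g with the comultiplication Δ(a,x) = (a,x)⊗(1,0) + (1,0)⊗(0,x) and counit ε(a,x) = a. Then (X,Δ,ε) is a coassociative counital coalgebra, and q((a,x)⊗(b,y)) = (ab, bx+[x,y]) is a coalgebra morphism: Δ∘q = (q⊗q)∘(1⊗τ⊗1)∘(Δ⊗Δ) and ε∘q = ε⊗ε (under the identification k⊗k ≅ k), where τ is the flip on X⊗X. -/
open TensorProduct

open TensorProduct

/-! `X` is spanned by the grouplike element `(1, 0)` and the primitive elements `(0, x)`. Every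
identity is linear in each tensor factor, so it suffices to check it on these generators, where
`q` sends `(1,0)⊗(1,0) ↦ (1,0)`, `(0,x)⊗(1,0) ↦ (0,x)`, `(1,0)⊗(0,y) ↦ 0` and
`(0,x)⊗(0,y) ↦ (0,⁅x,y⁆)`. -/

section

variable (k : Type*) [CommRing k] (L : Type*) [LieRing L] [LieAlgebra k L]

@[simp]
lemma Delta_mk_one_zero : Delta k L (1, 0) = (1, 0) ⊗ₜ (1, 0) := by
  simp [Delta, Prod.mk_zero_zero]

@[simp]
lemma Delta_mk_zero (x : L) :
    Delta k L (0, x) = ((0 : k), x) ⊗ₜ (1, 0) + (1, 0) ⊗ₜ ((0 : k), x) :=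
  rfl

@[simp]
lemma eps_apply (u : X k L) : eps k L u = u.1 :=
  rfl

@[simp]
lemma qc_apply (u v : X k L) : qc k L u v = (u.1 * v.1, v.1 • u.2 + ⁅u.2, v.2⁆) :=
  rfl

theorem Delta_coassoc :
    (TensorProduct.assoc k (X k L) (X k L) (X k L)).toLinearMap ∘ₗ
        (Delta k L).rTensor (X k L) ∘ₗ Delta k L =
      (Delta k L).lTensor (X k L) ∘ₗ Delta k L := by
  ext x <;> simp [tmul_add, add_tmul, add_assoc]

theorem lid_comp_eps_rTensor_comp_Delta :
    (TensorProduct.lid k (X k L)).toLinearMap ∘ₗ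
        (eps k L).rTensor (X k L) ∘ₗ Delta k L = LinearMap.id := by
  ext x <;> simp

theorem rid_comp_eps_lTensor_comp_Delta :
    (TensorProduct.rid k (X k L)).toLinearMap ∘ₗ
        (eps k L).lTensor (X k L) ∘ₗ Delta k L = LinearMap.id := by
  ext x <;> simp

theorem Delta_comp_lift_qc :
    Delta k L ∘ₗ TensorProduct.lift (qc k L) =
      TensorProduct.map (TensorProduct.lift (qc k L)) (TensorProduct.lift (qc k L)) ∘ₗ
        (TensorProduct.tensorTensorTensorComm k (X k L) (X k L) (X k L)
          (X k L)).toLinearMap ∘ₗ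
        TensorProduct.map (Delta k L) (Delta k L) := by
  ext x y <;> simp [tmul_add, add_tmul, Prod.mk_zero_zero]

theorem eps_comp_lift_qc :
    eps k L ∘ₗ TensorProduct.lift (qc k L) =
      LinearMap.mul' k k ∘ₗ TensorProduct.map (eps k L) (eps k L) := by
  ext x y <;> simp

end

/-- `X = k ⊕ g` with `Δ(a,x) = (a,x)⊗(1,0) + (1,0)⊗(0,x)` and `ε(a,x) = a` is a
coassociative counital coalgebra, and `q((a,x)⊗(b,y)) = (ab, b•x + ⁅x,y⁆)` is a
morphism of coalgebras. -/
theorem X_coalgebra_and_q_morphism (k : Type*) [CommRing k] (L : Type*) [LieRing L]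
    [LieAlgebra k L] :
    (TensorProduct.assoc k (X k L) (X k L) (X k L)).toLinearMap ∘ₗ
        (Delta k L).rTensor (X k L) ∘ₗ Delta k L =
      (Delta k L).lTensor (X k L) ∘ₗ Delta k L ∧
    (TensorProduct.lid k (X k L)).toLinearMap ∘ₗ
        (eps k L).rTensor (X k L) ∘ₗ Delta k L = LinearMap.id ∧
    (TensorProduct.rid k (X k L)).toLinearMap ∘ₗ
        (eps k L).lTensor (X k L) ∘ₗ Delta k L = LinearMap.id ∧
    Delta k L ∘ₗ TensorProduct.lift (qc k L) =
      TensorProduct.map (TensorProduct.lift (qc k L)) (TensorProduct.lift (qc k L)) ∘ₗ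
        (TensorProduct.tensorTensorTensorComm k (X k L) (X k L) (X k L)
          (X k L)).toLinearMap ∘ₗ
        TensorProduct.map (Delta k L) (Delta k L) ∧
    eps k L ∘ₗ TensorProduct.lift (qc k L) =
      LinearMap.mul' k k ∘ₗ TensorProduct.map (eps k L) (eps k L) :=
  ⟨Delta_coassoc k L, lid_comp_eps_rTensor_comp_Delta k L,
    rid_comp_eps_lTensor_comp_Delta k L, Delta_comp_lift_qc k L, eps_comp_lift_qc k L⟩
end
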